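/- Let ρ(x) = (1-|x|)𝟙_{[-1,1]}(x) be the triangular pulse density and let its Hilbert transform be H[ρ](s) = p.v. ∫_ℝ ρ(t)/(s-t) dt. Then for s ∈ (-1,1), s ≠ 0, ρ(s)·H[ρ](s) = -F(s), where F(s) = (1-|s|)[(1-s)log(1-s) - (1+s)log(1+s) + 2s log|s|]. -/

import Mathlib

open MeasureTheory Filter

private lemma contOnAux (s : ℝ) (A : Set ℝ) (h : ∀ t ∈ A, s - t ≠ 0) :
    ContinuousOn (fun t : ℝ => (1 - |t|) / (s - t)) A :=
  ((continuous_const.sub continuous_abs).continuousOn).div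
    ((continuous_const.sub continuous_id).continuousOn) h

private lemma intA (s a b : ℝ) (h : ∀ t ∈ Set.uIcc a b, s - t ≠ 0) :
    ∫ t in a..b, (1 + t) / (s - t) =
      (-b - (1 + s) * Real.log (s - b)) - (-a - (1 + s) * Real.log (s - a)) := by
  apply intervalIntegral.integral_eq_sub_of_hasDerivAt
  · intro t ht
    have hst := h t ht
    have h1 : HasDerivAt (fun x : ℝ => s - x) (-1) t := by
      simpa using (hasDerivAt_id t).const_sub s
    have h2 : HasDerivAt (fun x : ℝ => Real.log (s - x)) ((s - t)⁻¹ * (-1)) t :=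
      (Real.hasDerivAt_log hst).comp t h1
    have h3 : HasDerivAt (fun x : ℝ => -x - (1 + s) * Real.log (s - x))
        (-1 - (1 + s) * ((s - t)⁻¹ * (-1))) t :=
      ((hasDerivAt_id t).neg).sub (h2.const_mul (1 + s))
    convert h3 using 1
    iterate 2 rfl
    field_simp
    ring
  · apply ContinuousOn.intervalIntegrable
    exact ((continuous_const.add continuous_id).continuousOn).div
      ((continuous_const.sub continuous_id).continuousOn) h

private lemma intB (s a b : ℝ) (h : ∀ t ∈ Set.uIcc a b, s - t ≠ 0) :
    ∫ t in a..b, (1 - t) / (s - t) =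
      (b - (1 - s) * Real.log (s - b)) - (a - (1 - s) * Real.log (s - a)) := by
  apply intervalIntegral.integral_eq_sub_of_hasDerivAt
  · intro t ht
    have hst := h t ht
    have h1 : HasDerivAt (fun x : ℝ => s - x) (-1) t := by
      simpa using (hasDerivAt_id t).const_sub s
    have h2 : HasDerivAt (fun x : ℝ => Real.log (s - x)) ((s - t)⁻¹ * (-1)) t :=
      (Real.hasDerivAt_log hst).comp t h1
    have h3 : HasDerivAt (fun x : ℝ => x - (1 - s) * Real.log (s - x))
        (1 - (1 - s) * ((s - t)⁻¹ * (-1))) t :=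
      (hasDerivAt_id t).sub (h2.const_mul (1 - s))
    convert h3 using 1
    iterate 2 rfl
    field_simp
    ring
  · apply ContinuousOn.intervalIntegrable
    exact ((continuous_const.sub continuous_id).continuousOn).div
      ((continuous_const.sub continuous_id).continuousOn) h

private lemma setEq (s η : ℝ) (hη : 0 < η) (h1 : η < 1 + s) (h2 : η < 1 - s) :
    {t : ℝ | t ∈ Set.Ioo (-1:ℝ) 1 ∧ η < |s - t|}
      = Set.Ioo (-1) (s - η) ∪ Set.Ioo (s + η) 1 := by
  ext t
  simp only [Set.mem_setOf_eq, Set.mem_Ioo, Set.mem_union, lt_abs]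
  constructor
  · rintro ⟨⟨ha, hb⟩, hc | hc⟩
    · exact Or.inl ⟨ha, by linarith⟩
    · exact Or.inr ⟨by linarith, hb⟩
  · rintro (⟨ha, hb⟩ | ⟨ha, hb⟩)
    · exact ⟨⟨ha, by linarith⟩, Or.inl (by linarith)⟩
    · exact ⟨⟨by linarith, hb⟩, Or.inr (by linarith)⟩

private lemma splitInt (s η : ℝ) (hη : 0 < η) (h1 : η < 1 + s) (h2 : η < 1 - s) :
    ∫ t in {t : ℝ | t ∈ Set.Ioo (-1:ℝ) 1 ∧ η < |s - t|}, (1 - |t|) / (s - t)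
      = (∫ t in (-1:ℝ)..(s - η), (1 - |t|) / (s - t))
        + ∫ t in (s + η)..(1:ℝ), (1 - |t|) / (s - t) := by
  have hdisj : Disjoint (Set.Ioo (-1:ℝ) (s - η)) (Set.Ioo (s + η) 1) := by
    rw [Set.disjoint_left]
    rintro t ⟨_, hb⟩ ⟨hc, _⟩
    linarith
  have hL : IntegrableOn (fun t : ℝ => (1 - |t|) / (s - t)) (Set.Ioo (-1) (s - η)) := by
    refine ((contOnAux s (Set.Icc (-1) (s - η)) ?_).integrableOn_Icc).mono_set
      Set.Ioo_subset_Icc_self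
    intro t ht
    have := ht.2
    have : t < s := by linarith
    exact sub_ne_zero_of_ne this.ne'
  have hR : IntegrableOn (fun t : ℝ => (1 - |t|) / (s - t)) (Set.Ioo (s + η) 1) := by
    refine ((contOnAux s (Set.Icc (s + η) 1) ?_).integrableOn_Icc).mono_set
      Set.Ioo_subset_Icc_self
    intro t ht
    have := ht.1
    have hlt : s < t := by linarith
    intro h
    have : s = t := by linarith [sub_eq_zero.mp h]
    exact hlt.ne this
  rw [setEq s η hη h1 h2, setIntegral_union hdisj measurableSet_Ioo hL hR,
    intervalIntegral.integral_of_le (by linarith : (-1:ℝ) ≤ s - η),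
    intervalIntegral.integral_of_le (by linarith : s + η ≤ (1:ℝ)),
    integral_Ioc_eq_integral_Ioo, integral_Ioc_eq_integral_Ioo]

private lemma calcPos (s η : ℝ) (hs1 : 0 < s) (hs2 : s < 1) (hη : 0 < η)
    (hη1 : η < s) (hη2 : η < 1 - s) :
    ∫ t in {t : ℝ | t ∈ Set.Ioo (-1:ℝ) 1 ∧ η < |s - t|}, (1 - |t|) / (s - t)
      = ((1 + s) * Real.log (1 + s) - (1 - s) * Real.log (1 - s)
          - 2 * s * Real.log s) - 2 * η := by
  rw [splitInt s η hη (by linarith) (by linarith)]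
  have hsplitL : ∫ t in (-1:ℝ)..(s - η), (1 - |t|) / (s - t)
      = (∫ t in (-1:ℝ)..(0:ℝ), (1 - |t|) / (s - t))
        + ∫ t in (0:ℝ)..(s - η), (1 - |t|) / (s - t) := by
    refine (intervalIntegral.integral_add_adjacent_intervals ?_ ?_).symm
    · apply ContinuousOn.intervalIntegrable
      apply contOnAux
      intro t ht
      rw [Set.uIcc_of_le (by norm_num : (-1:ℝ) ≤ 0)] at ht
      have : t < s := lt_of_le_of_lt ht.2 hs1
      exact sub_ne_zero_of_ne this.ne'
    · apply ContinuousOn.intervalIntegrable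
      apply contOnAux
      intro t ht
      rw [Set.uIcc_of_le (by linarith : (0:ℝ) ≤ s - η)] at ht
      have : t < s := by linarith [ht.2]
      exact sub_ne_zero_of_ne this.ne'
  have c1 : ∫ t in (-1:ℝ)..(0:ℝ), (1 - |t|) / (s - t)
      = ∫ t in (-1:ℝ)..(0:ℝ), (1 + t) / (s - t) := by
    apply intervalIntegral.integral_congr
    intro t ht
    rw [Set.uIcc_of_le (by norm_num : (-1:ℝ) ≤ 0)] at ht
    show (1 - |t|) / (s - t) = (1 + t) / (s - t)
    rw [abs_of_nonpos ht.2, sub_neg_eq_add]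
  have c2 : ∫ t in (0:ℝ)..(s - η), (1 - |t|) / (s - t)
      = ∫ t in (0:ℝ)..(s - η), (1 - t) / (s - t) := by
    apply intervalIntegral.integral_congr
    intro t ht
    rw [Set.uIcc_of_le (by linarith : (0:ℝ) ≤ s - η)] at ht
    show (1 - |t|) / (s - t) = (1 - t) / (s - t)
    rw [abs_of_nonneg ht.1]
  have c3 : ∫ t in (s + η)..(1:ℝ), (1 - |t|) / (s - t)
      = ∫ t in (s + η)..(1:ℝ), (1 - t) / (s - t) := by
    apply intervalIntegral.integral_congr
    intro t ht
    rw [Set.uIcc_of_le (by linarith : s + η ≤ (1:ℝ))] at ht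
    have : (0:ℝ) ≤ t := by linarith [ht.1]
    show (1 - |t|) / (s - t) = (1 - t) / (s - t)
    rw [abs_of_nonneg this]
  rw [hsplitL, c1, c2, c3]
  rw [intA s (-1) 0 (by
      intro t ht
      rw [Set.uIcc_of_le (by norm_num : (-1:ℝ) ≤ 0)] at ht
      have : t < s := lt_of_le_of_lt ht.2 hs1
      exact sub_ne_zero_of_ne this.ne'),
    intB s 0 (s - η) (by
      intro t ht
      rw [Set.uIcc_of_le (by linarith : (0:ℝ) ≤ s - η)] at ht
      have : t < s := by linarith [ht.2]
      exact sub_ne_zero_of_ne this.ne'),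
    intB s (s + η) 1 (by
      intro t ht
      rw [Set.uIcc_of_le (by linarith : s + η ≤ (1:ℝ))] at ht
      have hlt : s < t := by linarith [ht.1]
      intro h
      exact hlt.ne (by linarith [sub_eq_zero.mp h]))]
  rw [show s - (s - η) = η by ring, show s - (s + η) = -η by ring,
    Real.log_neg_eq_log η, show s - (0:ℝ) = s by ring,
    show s - (-1:ℝ) = 1 + s by ring,
    show s - (1:ℝ) = -(1 - s) by ring, Real.log_neg_eq_log (1 - s)]
  ring

private lemma calcNeg (s η : ℝ) (hs1 : -1 < s) (hs2 : s < 0) (hη : 0 < η)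
    (hη1 : η < 1 + s) (hη2 : η < -s) :
    ∫ t in {t : ℝ | t ∈ Set.Ioo (-1:ℝ) 1 ∧ η < |s - t|}, (1 - |t|) / (s - t)
      = ((1 + s) * Real.log (1 + s) - (1 - s) * Real.log (1 - s)
          - 2 * s * Real.log (-s)) + 2 * η := by
  rw [splitInt s η hη (by linarith) (by linarith)]
  have hsplitR : ∫ t in (s + η)..(1:ℝ), (1 - |t|) / (s - t)
      = (∫ t in (s + η)..(0:ℝ), (1 - |t|) / (s - t))
        + ∫ t in (0:ℝ)..(1:ℝ), (1 - |t|) / (s - t) := by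
    refine (intervalIntegral.integral_add_adjacent_intervals ?_ ?_).symm
    · apply ContinuousOn.intervalIntegrable
      apply contOnAux
      intro t ht
      rw [Set.uIcc_of_le (by linarith : s + η ≤ (0:ℝ))] at ht
      have hlt : s < t := by linarith [ht.1]
      intro h
      exact hlt.ne (by linarith [sub_eq_zero.mp h])
    · apply ContinuousOn.intervalIntegrable
      apply contOnAux
      intro t ht
      rw [Set.uIcc_of_le (by norm_num : (0:ℝ) ≤ 1)] at ht
      have hlt : s < t := lt_of_lt_of_le hs2 ht.1
      intro h
      exact hlt.ne (by linarith [sub_eq_zero.mp h])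
  have c1 : ∫ t in (-1:ℝ)..(s - η), (1 - |t|) / (s - t)
      = ∫ t in (-1:ℝ)..(s - η), (1 + t) / (s - t) := by
    apply intervalIntegral.integral_congr
    intro t ht
    rw [Set.uIcc_of_le (by linarith : (-1:ℝ) ≤ s - η)] at ht
    have : t ≤ 0 := by linarith [ht.2]
    show (1 - |t|) / (s - t) = (1 + t) / (s - t)
    rw [abs_of_nonpos this, sub_neg_eq_add]
  have c2 : ∫ t in (s + η)..(0:ℝ), (1 - |t|) / (s - t)
      = ∫ t in (s + η)..(0:ℝ), (1 + t) / (s - t) := by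
    apply intervalIntegral.integral_congr
    intro t ht
    rw [Set.uIcc_of_le (by linarith : s + η ≤ (0:ℝ))] at ht
    show (1 - |t|) / (s - t) = (1 + t) / (s - t)
    rw [abs_of_nonpos ht.2, sub_neg_eq_add]
  have c3 : ∫ t in (0:ℝ)..(1:ℝ), (1 - |t|) / (s - t)
      = ∫ t in (0:ℝ)..(1:ℝ), (1 - t) / (s - t) := by
    apply intervalIntegral.integral_congr
    intro t ht
    rw [Set.uIcc_of_le (by norm_num : (0:ℝ) ≤ 1)] at ht
    show (1 - |t|) / (s - t) = (1 - t) / (s - t)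
    rw [abs_of_nonneg ht.1]
  rw [hsplitR, c1, c2, c3]
  rw [intA s (-1) (s - η) (by
      intro t ht
      rw [Set.uIcc_of_le (by linarith : (-1:ℝ) ≤ s - η)] at ht
      have : t < s := by linarith [ht.2]
      exact sub_ne_zero_of_ne this.ne'),
    intA s (s + η) 0 (by
      intro t ht
      rw [Set.uIcc_of_le (by linarith : s + η ≤ (0:ℝ))] at ht
      have hlt : s < t := by linarith [ht.1]
      intro h
      exact hlt.ne (by linarith [sub_eq_zero.mp h])),
    intB s 0 1 (by
      intro t ht
      rw [Set.uIcc_of_le (by norm_num : (0:ℝ) ≤ 1)] at ht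
      have hlt : s < t := lt_of_lt_of_le hs2 ht.1
      intro h
      exact hlt.ne (by linarith [sub_eq_zero.mp h]))]
  rw [show s - (s - η) = η by ring, show s - (s + η) = -η by ring,
    Real.log_neg_eq_log η, show s - (0:ℝ) = -(-s) by ring, Real.log_neg_eq_log (-s),
    show s - (-1:ℝ) = 1 + s by ring,
    show s - (1:ℝ) = -(1 - s) by ring, Real.log_neg_eq_log (1 - s)]
  ring

theorem stmt9 (s : ℝ) (hs : s ∈ Set.Ioo (-1:ℝ) 1) (hs0 : s ≠ 0) :
    Tendsto (fun η : ℝ =>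
        ∫ t in {t : ℝ | t ∈ Set.Ioo (-1:ℝ) 1 ∧ η < |s - t|}, (1 - |t|) / (s - t))
      (nhdsWithin 0 (Set.Ioi 0))
      (nhds (-((1 - s) * Real.log (1 - s) - (1 + s) * Real.log (1 + s)
        + 2 * s * Real.log |s|))) := by
  obtain ⟨hs1, hs2⟩ := hs
  rcases hs0.lt_or_gt with hneg | hpos
  · -- s < 0
    set C : ℝ := (1 + s) * Real.log (1 + s) - (1 - s) * Real.log (1 - s)
        - 2 * s * Real.log (-s) with hCdef
    have hC : -((1 - s) * Real.log (1 - s) - (1 + s) * Real.log (1 + s)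
        + 2 * s * Real.log |s|) = C := by
      rw [abs_of_neg hneg, hCdef]; ring
    rw [hC]
    have htend : Tendsto (fun η : ℝ => C + 2 * η) (nhdsWithin 0 (Set.Ioi 0)) (nhds C) := by
      have h0 : Tendsto (fun η : ℝ => C + 2 * η) (nhds 0) (nhds (C + 2 * 0)) :=
        (continuous_const.add (continuous_const.mul continuous_id)).tendsto 0
      simpa using h0.mono_left nhdsWithin_le_nhds
    refine Tendsto.congr' ?_ htend
    have hmem : Set.Ioo (0:ℝ) (min (1 + s) (-s)) ∈ nhdsWithin (0:ℝ) (Set.Ioi 0) :=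
      Ioo_mem_nhdsGT_of_mem ⟨le_refl 0, by simp [lt_min_iff]; constructor <;> linarith⟩
    filter_upwards [hmem] with η hη
    exact (calcNeg s η hs1 hneg hη.1 (lt_of_lt_of_le hη.2 (min_le_left _ _))
      (lt_of_lt_of_le hη.2 (min_le_right _ _))).symm
  · -- 0 < s
    set C : ℝ := (1 + s) * Real.log (1 + s) - (1 - s) * Real.log (1 - s)
        - 2 * s * Real.log s with hCdef
    have hC : -((1 - s) * Real.log (1 - s) - (1 + s) * Real.log (1 + s)
        + 2 * s * Real.log |s|) = C := by
      rw [abs_of_pos hpos, hCdef]; ring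
    rw [hC]
    have htend : Tendsto (fun η : ℝ => C - 2 * η) (nhdsWithin 0 (Set.Ioi 0)) (nhds C) := by
      have h0 : Tendsto (fun η : ℝ => C - 2 * η) (nhds 0) (nhds (C - 2 * 0)) :=
        (continuous_const.sub (continuous_const.mul continuous_id)).tendsto 0
      simpa using h0.mono_left nhdsWithin_le_nhds
    refine Tendsto.congr' ?_ htend
    have hmem : Set.Ioo (0:ℝ) (min s (1 - s)) ∈ nhdsWithin (0:ℝ) (Set.Ioi 0) :=
      Ioo_mem_nhdsGT_of_mem ⟨le_refl 0, by simp [lt_min_iff]; constructor <;> linarith⟩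
    filter_upwards [hmem] with η hη
    exact (calcPos s η hpos hs2 hη.1 (lt_of_lt_of_le hη.2 (min_le_left _ _))
      (lt_of_lt_of_le hη.2 (min_le_right _ _))).symm
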